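/- Let (E, ν) be a σ-finite measure space, m ≥ 2, and let f^{(1)},…,f^{(m)} : E → [0,∞) be measurable probability densities with f^{(z)} > 0 ν-a.e. and all cross entropies finite (for all i, j, the function y ↦ f^{(i)}(y) log f^{(j)}(y) is ν-integrable). Then for every u ∈ ℝ^m with u_z > 0 for all z, and every coordinate z, the function t ↦ φ((u_1,…,u_{z−1}, t, u_{z+1},…,u_m); f) (defined by the same formula on positive vectors) is differentiable at t = u_z with derivative KL(f^{(z)} ‖ g_u) − ξ, where KL(p‖q) = ∫ p log₂(p/q) dν, g_u = ∑_i u_i f^{(i)}, and ξ = log₂ e. -/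

import Mathlib

open Finset MeasureTheory

/-- Differential entropy (base 2) of a density g with respect to ν. -/
noncomputable def entHf {E : Type*} [MeasurableSpace E] (ν : Measure E)
    (g : E → ℝ) : ℝ :=
  ∫ y, -(g y * Real.logb 2 (g y)) ∂ν

/-- The channel function φ(u;f) = H(∑_z u_z f⁽ᶻ⁾) − ∑_z u_z H(f⁽ᶻ⁾). -/
noncomputable def phiF {E : Type*} [MeasurableSpace E] (ν : Measure E)
    {m : ℕ} (f : Fin m → E → ℝ) (u : Fin m → ℝ) : ℝ :=
  entHf ν (fun y => ∑ z, u z * f z y) - ∑ z, u z * entHf ν (f z)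


lemma helper_int {E : Type*} [MeasurableSpace E] (ν : Measure E) {m : ℕ}
    (f : Fin m → E → ℝ) (hmeas : ∀ z, Measurable (f z)) (hnonneg : ∀ z y, 0 ≤ f z y)
    (hdens : ∀ z, ∫ y, f z y ∂ν = 1)
    (hpos : ∀ z, ∀ᵐ y ∂ν, 0 < f z y)
    (hcross : ∀ i j, Integrable (fun y => f i y * Real.log (f j y)) ν)
    (c : Fin m → ℝ) (hc : ∀ i, 0 < c i) (k : Fin m) :
    Integrable (fun y => f k y * |Real.log (∑ i, c i * f i y)|) ν ∧
    Integrable (fun y => f k y * Real.log (∑ i, c i * f i y)) ν := by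
  have hposall : ∀ᵐ y ∂ν, ∀ i, 0 < f i y := (MeasureTheory.ae_all_iff).2 hpos
  set T : E → ℝ := fun y => ∑ i, |Real.log (f i y)| with hT
  set K : ℝ := |Real.log (c k)| + |Real.log (∑ i, c i)| with hK
  have hfk_int : Integrable (f k) ν := by
    by_contra h
    have := hdens k
    rw [MeasureTheory.integral_undef h] at this
    norm_num at this
  have h2 : ∀ i, Integrable (fun y => f k y * |Real.log (f i y)|) ν := by
    intro i
    have := (hcross k i).abs
    refine this.congr (Filter.Eventually.of_forall fun y => ?_)
    simp only [abs_mul, abs_of_nonneg (hnonneg k y)]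
  have hTint : Integrable (fun y => f k y * (K + T y)) ν := by
    have heq : (fun y => f k y * (K + T y))
        = fun y => K * f k y + ∑ i, f k y * |Real.log (f i y)| := by
      funext y
      show f k y * (K + ∑ i, |Real.log (f i y)|) = _
      rw [mul_add, Finset.mul_sum]
      ring
    rw [heq]
    exact (hfk_int.const_mul K).add (integrable_finset_sum _ fun i _ => h2 i)
  have hbd : ∀ᵐ y ∂ν, |Real.log (∑ i, c i * f i y)| ≤ K + T y := by
    filter_upwards [hposall] with y hy
    have hTnn : 0 ≤ T y := Finset.sum_nonneg fun i _ => abs_nonneg _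
    have hSpos : 0 < ∑ i, c i * f i y :=
      Finset.sum_pos (fun i _ => mul_pos (hc i) (hy i)) ⟨k, Finset.mem_univ k⟩
    have hcs : 0 < ∑ i, c i := Finset.sum_pos (fun i _ => hc i) ⟨k, Finset.mem_univ k⟩
    have habsT : ∀ i, |Real.log (f i y)| ≤ T y := fun i =>
      Finset.single_le_sum (f := fun j => |Real.log (f j y)|)
        (fun j _ => abs_nonneg _) (Finset.mem_univ i)
    have hlogle : ∀ i, Real.log (f i y) ≤ T y := fun i =>
      le_trans (le_abs_self _) (habsT i)
    have hloggr : ∀ i, -(T y) ≤ Real.log (f i y) := fun i =>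
      le_trans (neg_le_neg (habsT i)) (neg_abs_le _)
    rw [abs_le]
    constructor
    · -- lower bound
      have h1 : c k * Real.exp (-(T y)) ≤ ∑ i, c i * f i y := by
        have : c k * Real.exp (-(T y)) ≤ c k * f k y := by
          apply mul_le_mul_of_nonneg_left _ (hc k).le
          calc Real.exp (-(T y)) ≤ Real.exp (Real.log (f k y)) :=
                Real.exp_le_exp.2 (hloggr k)
            _ = f k y := Real.exp_log (hy k)
        exact this.trans (Finset.single_le_sum
          (fun i _ => mul_nonneg (hc i).le (hy i).le) (Finset.mem_univ k))
      have := Real.log_le_log (mul_pos (hc k) (Real.exp_pos _)) h1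
      rw [Real.log_mul (hc k).ne' (Real.exp_ne_zero _), Real.log_exp] at this
      have hK1 : -|Real.log (c k)| ≤ Real.log (c k) := neg_abs_le _
      rw [hK]
      nlinarith [abs_nonneg (Real.log (∑ i, c i))]
    · -- upper bound
      have h1 : ∑ i, c i * f i y ≤ (∑ i, c i) * Real.exp (T y) := by
        rw [Finset.sum_mul]
        apply Finset.sum_le_sum
        intro i _
        apply mul_le_mul_of_nonneg_left _ (hc i).le
        calc f i y = Real.exp (Real.log (f i y)) := (Real.exp_log (hy i)).symm
          _ ≤ Real.exp (T y) := Real.exp_le_exp.2 (hlogle i)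
      have := Real.log_le_log hSpos h1
      rw [Real.log_mul hcs.ne' (Real.exp_ne_zero _), Real.log_exp] at this
      have hK2 : Real.log (∑ i, c i) ≤ |Real.log (∑ i, c i)| := le_abs_self _
      rw [hK]
      nlinarith [abs_nonneg (Real.log (c k))]
  have hSmeas : Measurable (fun y => ∑ i, c i * f i y) :=
    Finset.measurable_sum _ fun i _ => (hmeas i).const_mul (c i)
  have habs : Integrable (fun y => f k y * |Real.log (∑ i, c i * f i y)|) ν := by
    apply hTint.mono' ((hmeas k).mul hSmeas.log.abs).aestronglyMeasurable
    filter_upwards [hbd] with y hy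
    rw [Real.norm_eq_abs, Pi.mul_apply, abs_mul, abs_of_nonneg (hnonneg k y), abs_abs]
    exact mul_le_mul_of_nonneg_left hy (hnonneg k y)
  refine ⟨habs, ?_⟩
  apply habs.mono' ((hmeas k).mul hSmeas.log).aestronglyMeasurable
  refine Filter.Eventually.of_forall fun y => ?_
  rw [Real.norm_eq_abs, Pi.mul_apply, abs_mul, abs_of_nonneg (hnonneg k y)]

/-- for positive densities with finite cross entropies, the partial
derivative of φ(·;f) in coordinate z at a strictly positive u exists and equals
KL(f⁽ᶻ⁾ ‖ g_u) − ξ, where g_u = ∑_i u_i f⁽ⁱ⁾ and ξ = log₂ e. -/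
theorem general_channel_gradient {E : Type*} [MeasurableSpace E]
    (ν : Measure E) [SigmaFinite ν] {m : ℕ} (hm : 2 ≤ m)
    (f : Fin m → E → ℝ)
    (hmeas : ∀ z, Measurable (f z)) (hnonneg : ∀ z y, 0 ≤ f z y)
    (hdens : ∀ z, ∫ y, f z y ∂ν = 1)
    (hpos : ∀ z, ∀ᵐ y ∂ν, 0 < f z y)
    (hcross : ∀ i j, Integrable (fun y => f i y * Real.log (f j y)) ν)
    (u : Fin m → ℝ) (hu : ∀ z, 0 < u z) (z : Fin m) :
    HasDerivAt (fun t => phiF ν f (Function.update u z t))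
      ((∫ y, f z y * Real.logb 2 (f z y / ∑ i, u i * f i y) ∂ν) -
        Real.logb 2 (Real.exp 1)) (u z) := by
  have hposall : ∀ᵐ y ∂ν, ∀ i, 0 < f i y := (MeasureTheory.ae_all_iff).2 hpos
  have hL : (0:ℝ) < Real.log 2 := Real.log_pos one_lt_two
  set L : ℝ := Real.log 2 with hLdef
  set s : E → ℝ := fun y => ∑ i ∈ Finset.univ.erase z, u i * f i y with hs
  -- generic sum-splitting
  have hgen : ∀ (t : ℝ) (w : Fin m → ℝ), (∑ i, Function.update u z t i * w i)
      = t * w z + ∑ i ∈ Finset.univ.erase z, u i * w i := by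
    intro t w
    rw [← Finset.add_sum_erase _ (fun i => Function.update u z t i * w i) (Finset.mem_univ z),
      Function.update_self]
    congr 1
    exact Finset.sum_congr rfl fun i hi => by
      rw [Function.update_of_ne (Finset.ne_of_mem_erase hi)]
  have hsumf : ∀ (t : ℝ) (y : E), (∑ i, Function.update u z t i * f i y)
      = t * f z y + ∑ i ∈ Finset.univ.erase z, u i * f i y := fun t y =>
    hgen t (fun i => f i y)
  have hgu : ∀ (w : Fin m → ℝ), (∑ i, u i * w i)
      = u z * w z + ∑ i ∈ Finset.univ.erase z, u i * w i := fun w =>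
    (Finset.add_sum_erase _ (fun i => u i * w i) (Finset.mem_univ z)).symm
  have hsmeas : Measurable s := Finset.measurable_sum _ fun i _ => (hmeas i).const_mul (u i)
  have hsnn : ∀ᵐ y ∂ν, 0 ≤ s y := by
    filter_upwards [hposall] with y hy
    exact Finset.sum_nonneg fun i _ => mul_nonneg (hu i).le (hy i).le
  have hfzint : Integrable (f z) ν := by
    by_contra h
    have := hdens z
    rw [MeasureTheory.integral_undef h] at this
    norm_num at this
  set F : ℝ → E → ℝ := fun t y =>
    -((t * f z y + s y) * Real.log (t * f z y + s y)) / L with hF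
  set F' : ℝ → E → ℝ := fun t y =>
    -(f z y * (Real.log (t * f z y + s y) + 1)) / L with hF'
  -- coefficient vectors for the dominating bound
  set cA : Fin m → ℝ := Function.update u z (u z / 2) with hcA
  set cB : Fin m → ℝ := Function.update u z (u z + u z / 2) with hcB
  have hcApos : ∀ i, 0 < cA i := by
    intro i
    rcases eq_or_ne i z with rfl | h
    · simpa [hcA] using half_pos (hu i)
    · simpa [hcA, Function.update_of_ne h] using hu i
  have hcBpos : ∀ i, 0 < cB i := by
    intro i
    rcases eq_or_ne i z with rfl | h
    · simp only [hcB, Function.update_self]; linarith [hu i]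
    · simpa [hcB, Function.update_of_ne h] using hu i
  have hAeq : ∀ y, (∑ i, cA i * f i y) = (u z / 2) * f z y + s y := fun y =>
    hgen (u z / 2) (fun i => f i y)
  have hBeq : ∀ y, (∑ i, cB i * f i y) = (u z + u z / 2) * f z y + s y := fun y =>
    hgen (u z + u z / 2) (fun i => f i y)
  have hGeq : ∀ y, (∑ i, u i * f i y) = u z * f z y + s y := fun y =>
    hgu (fun i => f i y)
  set bound : E → ℝ := fun y =>
    (f z y * |Real.log ((u z / 2) * f z y + s y)|
      + f z y * |Real.log ((u z + u z / 2) * f z y + s y)| + f z y) / L with hbound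
  have hb1 : Integrable (fun y => f z y * |Real.log ((u z / 2) * f z y + s y)|) ν := by
    have := (helper_int ν f hmeas hnonneg hdens hpos hcross cA hcApos z).1
    refine this.congr (Filter.Eventually.of_forall fun y => ?_)
    simp only [hAeq y]
  have hb2 : Integrable (fun y => f z y * |Real.log ((u z + u z / 2) * f z y + s y)|) ν := by
    have := (helper_int ν f hmeas hnonneg hdens hpos hcross cB hcBpos z).1
    refine this.congr (Filter.Eventually.of_forall fun y => ?_)
    simp only [hBeq y]
  have bound_int : Integrable bound ν := ((hb1.add hb2).add hfzint).div_const L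
  -- measurability
  have hF_meas : ∀ᶠ t in nhds (u z), AEStronglyMeasurable (F t) ν := by
    refine Filter.Eventually.of_forall fun t => ?_
    have hm1 : Measurable fun y => t * f z y + s y := ((hmeas z).const_mul t).add hsmeas
    exact (((hm1.mul hm1.log).neg).div_const L).aestronglyMeasurable
  have hF'_meas : AEStronglyMeasurable (F' (u z)) ν := by
    have hm1 : Measurable fun y => u z * f z y + s y := ((hmeas z).const_mul (u z)).add hsmeas
    exact ((((hmeas z).mul (hm1.log.add measurable_const)).neg).div_const L).aestronglyMeasurable
  -- integrability of F (u z)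
  have hint2 : Integrable (fun y => f z y * Real.log (∑ i, u i * f i y)) ν :=
    (helper_int ν f hmeas hnonneg hdens hpos hcross u hu z).2
  have hF_int : Integrable (F (u z)) ν := by
    have key : Integrable (fun y => (∑ i, u i * f i y) * Real.log (∑ i, u i * f i y)) ν := by
      have heq : (fun y => (∑ i, u i * f i y) * Real.log (∑ i, u i * f i y))
          = fun y => ∑ i, u i * (f i y * Real.log (∑ j, u j * f j y)) := by
        funext y
        rw [Finset.sum_mul]
        exact Finset.sum_congr rfl fun i _ => mul_assoc _ _ _
      rw [heq]
      exact integrable_finset_sum _ fun i _ =>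
        ((helper_int ν f hmeas hnonneg hdens hpos hcross u hu i).2).const_mul (u i)
    refine ((key.neg).div_const L).congr (Filter.Eventually.of_forall fun y => ?_)
    simp only [Pi.neg_apply, hF]
    rw [hGeq y]
  -- the dominating bound
  have h_bound : ∀ᵐ y ∂ν, ∀ t ∈ Metric.ball (u z) (u z / 2), ‖F' t y‖ ≤ bound y := by
    filter_upwards [hposall] with y hy
    intro t ht
    have hfz : 0 < f z y := hy z
    have hsy : 0 ≤ s y := Finset.sum_nonneg fun i _ => mul_nonneg (hu i).le (hy i).le
    rw [Metric.mem_ball, Real.dist_eq, abs_sub_lt_iff] at ht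
    have ht1 : u z / 2 < t := by linarith [ht.2]
    have ht2 : t < u z + u z / 2 := by linarith [ht.1]
    have htpos : 0 < t := lt_trans (half_pos (hu z)) ht1
    set x := t * f z y + s y with hx
    set A := (u z / 2) * f z y + s y with hA
    set B := (u z + u z / 2) * f z y + s y with hB
    have hApos : 0 < A :=
      add_pos_of_pos_of_nonneg (mul_pos (half_pos (hu z)) hfz) hsy
    have hxpos : 0 < x :=
      add_pos_of_pos_of_nonneg (mul_pos htpos hfz) hsy
    have hAx : A ≤ x := by
      have := mul_le_mul_of_nonneg_right ht1.le hfz.le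
      simp only [hA, hx]; linarith
    have hxB : x ≤ B := by
      have := mul_le_mul_of_nonneg_right ht2.le hfz.le
      simp only [hB, hx]; linarith
    have l1 : Real.log A ≤ Real.log x := Real.log_le_log hApos hAx
    have l2 : Real.log x ≤ Real.log B := Real.log_le_log hxpos hxB
    have habs : |Real.log x| ≤ |Real.log A| + |Real.log B| := by
      rw [abs_le]
      constructor
      · linarith [neg_abs_le (Real.log A), abs_nonneg (Real.log B)]
      · linarith [le_abs_self (Real.log B), abs_nonneg (Real.log A)]
    simp only [hF', hbound]
    rw [norm_div, Real.norm_eq_abs, Real.norm_eq_abs, abs_of_pos hL, abs_neg, abs_mul,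
      abs_of_nonneg hfz.le]
    gcongr
    calc f z y * |Real.log x + 1| ≤ f z y * (|Real.log x| + 1) := by
          apply mul_le_mul_of_nonneg_left _ hfz.le
          calc |Real.log x + 1| ≤ |Real.log x| + |(1:ℝ)| := abs_add_le _ _
            _ = |Real.log x| + 1 := by rw [abs_one]
      _ ≤ f z y * (|Real.log A| + |Real.log B| + 1) := by
          apply mul_le_mul_of_nonneg_left _ hfz.le
          linarith
      _ = f z y * |Real.log A| + f z y * |Real.log B| + f z y := by ring
  -- differentiability pointwise
  have h_diff : ∀ᵐ y ∂ν, ∀ t ∈ Metric.ball (u z) (u z / 2),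
      HasDerivAt (fun t => F t y) (F' t y) t := by
    filter_upwards [hposall] with y hy
    intro t ht
    have hfz : 0 < f z y := hy z
    have hsy : 0 ≤ s y := Finset.sum_nonneg fun i _ => mul_nonneg (hu i).le (hy i).le
    rw [Metric.mem_ball, Real.dist_eq, abs_sub_lt_iff] at ht
    have htpos : 0 < t := by linarith [ht.2, hu z]
    have hxpos : 0 < t * f z y + s y :=
      add_pos_of_pos_of_nonneg (mul_pos htpos hfz) hsy
    have h1 : HasDerivAt (fun t : ℝ => t * f z y + s y) (f z y) t := by
      simpa using ((hasDerivAt_id t).mul_const (f z y)).add_const (s y)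
    have h2 : HasDerivAt (fun x : ℝ => x * Real.log x)
        (Real.log (t * f z y + s y) + 1) (t * f z y + s y) :=
      Real.hasDerivAt_mul_log hxpos.ne'
    have h4 : HasDerivAt (fun t : ℝ => -((t * f z y + s y) * Real.log (t * f z y + s y)) / L)
        (-((Real.log (t * f z y + s y) + 1) * f z y) / L) t :=
      by have h3 := h2.comp t h1; exact h3.neg.div_const L
    have h5 : F' t y = -((Real.log (t * f z y + s y) + 1) * f z y) / L := by
      simp only [hF']; ring
    rw [h5]
    exact h4
  have main := hasDerivAt_integral_of_dominated_loc_of_deriv_le (F := F) (F' := F')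
    (Metric.ball_mem_nhds _ (half_pos (hu z))) hF_meas hF_int hF'_meas h_bound bound_int h_diff
  -- linear part
  have hlin : HasDerivAt (fun t : ℝ => t * entHf ν (f z)
      + ∑ i ∈ Finset.univ.erase z, u i * entHf ν (f i)) (entHf ν (f z)) (u z) := by
    simpa using ((hasDerivAt_id (u z)).mul_const (entHf ν (f z))).add_const
      (∑ i ∈ Finset.univ.erase z, u i * entHf ν (f i))
  -- rewrite the function
  have hphi : (fun t => phiF ν f (Function.update u z t))
      = fun t => (∫ y, F t y ∂ν) - (t * entHf ν (f z)
        + ∑ i ∈ Finset.univ.erase z, u i * entHf ν (f i)) := by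
    funext t
    simp only [phiF, entHf]
    congr 1
    · refine integral_congr_ae (Filter.Eventually.of_forall fun y => ?_)
      simp only [hsumf t y]
      simp only [hF, ← Real.log_div_log]
      ring
    · exact hgen t (fun i => entHf ν (f i))
  rw [hphi]
  have hd := main.2.sub hlin
  convert hd using 1
  case e'_4 => rfl
  case e'_5 => rfl
  case e'_8 => rfl
  -- final computation of the derivative value
  have e1 : ∫ y, F' (u z) y ∂ν
      = -((∫ y, f z y * Real.log (∑ i, u i * f i y) ∂ν) + 1) / L := by
    have heq : (fun y => F' (u z) y)
        = fun y => -(f z y * Real.log (∑ i, u i * f i y) + f z y) / L := by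
      funext y
      simp only [hF']
      rw [hGeq y]
      ring
    rw [heq, integral_div, integral_neg, integral_add hint2 hfzint, hdens z]
  have e2 : ∫ y, f z y * Real.logb 2 (f z y / ∑ i, u i * f i y) ∂ν
      = ((∫ y, f z y * Real.log (f z y) ∂ν)
        - (∫ y, f z y * Real.log (∑ i, u i * f i y) ∂ν)) / L := by
    have hae : ∀ᵐ y ∂ν, f z y * Real.logb 2 (f z y / ∑ i, u i * f i y)
        = (f z y * Real.log (f z y) - f z y * Real.log (∑ i, u i * f i y)) / L := by
      filter_upwards [hposall] with y hy
      have hG : 0 < ∑ i, u i * f i y :=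
        Finset.sum_pos (fun i _ => mul_pos (hu i) (hy i)) ⟨z, Finset.mem_univ z⟩
      rw [← Real.log_div_log, Real.log_div (hy z).ne' hG.ne']
      ring
    rw [integral_congr_ae hae, integral_div, integral_sub (hcross z z) hint2]
  have e3 : entHf ν (f z) = -(∫ y, f z y * Real.log (f z y) ∂ν) / L := by
    have heq : (fun y => -(f z y * Real.logb 2 (f z y)))
        = fun y => -(f z y * Real.log (f z y)) / L := by
      funext y
      rw [← Real.log_div_log]
      ring
    rw [entHf, heq, integral_div, integral_neg]
  have e4 : Real.logb 2 (Real.exp 1) = 1 / L := by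
    rw [← Real.log_div_log, Real.log_exp]
  rw [e1, e2, e3, e4]
  ring
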